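/- Let G = H × K be a finite direct product. Then Univ⁺(G) ⊆ Univ⁺(H) × Univ⁺(K), Univ⁻(G) ⊆ Univ⁻(H) × Univ⁻(K), and hence Univ(G) ⊆ Univ(H) × Univ(K). -/
import Mathlib


/-- `arrow x y` means `⟨x⟩` is normal in `⟨x, y⟩`. -/
def arrow {G : Type*} [Group G] (x y : G) : Prop :=
  ((Subgroup.zpowers x).subgroupOf (Subgroup.closure {x, y})).Normal

/-- `x ∈ Univ⁻(G)` : `⟨x⟩ ⊴ ⟨x,y⟩` for all `y`. -/
def isUnivM {G : Type*} [Group G] (x : G) : Prop := ∀ y : G, arrow x y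

/-- `x ∈ Univ⁺(G)` : `⟨y⟩ ⊴ ⟨x,y⟩` for all `y`. -/
def isUnivP {G : Type*} [Group G] (x : G) : Prop := ∀ y : G, arrow y x

/-- `isUniv x` : `x` is a bidirectional universal vertex. -/
def isUniv {G : Type*} [Group G] (x : G) : Prop :=
  ∀ y : G, arrow x y ∧ arrow y x

lemma arrow_iff {G : Type*} [Group G] (x y : G) :
    arrow x y ↔ ∀ a ∈ Subgroup.closure {x, y}, ∀ n ∈ Subgroup.zpowers x,
      a * n * a⁻¹ ∈ Subgroup.zpowers x := by
  constructor
  · intro h a ha n hn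
    have hx : x ∈ Subgroup.closure ({x, y} : Set G) :=
      Subgroup.subset_closure (by simp)
    have hn' : n ∈ Subgroup.closure ({x, y} : Set G) :=
      (Subgroup.zpowers_le.mpr hx) hn
    have := h.conj_mem ⟨n, hn'⟩ (by simpa [Subgroup.mem_subgroupOf] using hn) ⟨a, ha⟩
    simpa [Subgroup.mem_subgroupOf] using this
  · intro h
    constructor
    intro n hn g
    simp only [Subgroup.mem_subgroupOf] at hn ⊢
    exact h g g.2 n hn

lemma arrow_map {G G' : Type*} [Group G] [Group G'] (f : G →* G') {x y : G}
    (h : arrow x y) : arrow (f x) (f y) := by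
  rw [arrow_iff] at h ⊢
  intro a ha n hn
  rw [show ({f x, f y} : Set G') = f '' {x, y} by simp [Set.image_insert_eq],
    ← MonoidHom.map_closure] at ha
  obtain ⟨b, hb, rfl⟩ := ha
  rw [← MonoidHom.map_zpowers] at hn ⊢
  obtain ⟨m, hm, rfl⟩ := hn
  exact ⟨b * m * b⁻¹, h b hb m hm, by simp⟩

theorem stmt10 {H K : Type*} [Group H] [Group K] [Finite H] [Finite K] :
    (∀ x : H × K, isUnivP x → isUnivP x.1 ∧ isUnivP x.2) ∧
    (∀ x : H × K, isUnivM x → isUnivM x.1 ∧ isUnivM x.2) ∧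
    (∀ x : H × K, isUniv x → isUniv x.1 ∧ isUniv x.2) := by
  refine ⟨fun x hx => ⟨fun y => ?_, fun y => ?_⟩,
    fun x hx => ⟨fun y => ?_, fun y => ?_⟩,
    fun x hx => ⟨fun y => ⟨?_, ?_⟩, fun y => ⟨?_, ?_⟩⟩⟩
  · simpa using arrow_map (MonoidHom.fst H K) (hx (y, 1))
  · simpa using arrow_map (MonoidHom.snd H K) (hx (1, y))
  · simpa using arrow_map (MonoidHom.fst H K) (hx (y, 1))
  · simpa using arrow_map (MonoidHom.snd H K) (hx (1, y))
  · simpa using arrow_map (MonoidHom.fst H K) (hx (y, 1)).1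
  · simpa using arrow_map (MonoidHom.fst H K) (hx (y, 1)).2
  · simpa using arrow_map (MonoidHom.snd H K) (hx (1, y)).1
  · simpa using arrow_map (MonoidHom.snd H K) (hx (1, y)).2
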